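/- For every p with 0.3334 < p ≤ 1 there exist x, y, z > 0 such that √2·p·x·y·z > N(p,x,y,z), where N(p,x,y,z) = p/2 + ((1−p)/4)x² + ((1−p)/4)x²y² + ((1−p)/4)x²z² + ((1+p)/4)x²y²z². Consequently, for such p the locally filtered state of ρ(p) = p |GHZ⟩⟨GHZ| + ((1−p)/4)|0⟩⟨0|⊗I₄, |GHZ⟩ = (1/√2)(|000⟩+|111⟩), obtained with filters F_A = diag(x,1), F_B = diag(y,1), F_C = diag(z,1), has correlation-matrix maximal singular value √2 p x y z / N > 1, i.e. the Svetlichny bound 4 is exceeded; in particular, for 0.3334 < p ≤ 1/√2 the state ρ(p) itself does not violate the Svetlichny inequality but its filtered state does (hidden genuine nonlocality). -/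

import Mathlib

open Matrix Polynomial
open scoped Kronecker ComplexOrder

/-- The Pauli matrices σ₁, σ₂, σ₃ (indexed by `Fin 3`). -/
noncomputable def pauli : Fin 3 → Matrix (Fin 2) (Fin 2) ℂ :=
  ![!![0, 1; 1, 0], !![0, -Complex.I; Complex.I, 0], !![1, 0; 0, -1]]

/-- The correlation matrix of a three-qubit state: `M_{j,(i,k)} = tr[ρ(σ_i⊗σ_j⊗σ_k)]`. -/
noncomputable def corrMat (ρ : Matrix (Fin 2 × Fin 2 × Fin 2) (Fin 2 × Fin 2 × Fin 2) ℂ) :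
    Matrix (Fin 3) (Fin 3 × Fin 3) ℝ :=
  fun j ik => ((ρ * (pauli ik.1 ⊗ₖ (pauli j ⊗ₖ pauli ik.2))).trace).re

/-- The observable `G = g₁σ₁ + g₂σ₂ + g₃σ₃` associated to a real vector `g ∈ ℝ³`. -/
noncomputable def obs (g : Fin 3 → ℝ) : Matrix (Fin 2) (Fin 2) ℂ :=
  ∑ i : Fin 3, ((g i : ℝ) : ℂ) • pauli i

/-- The Svetlichny operator built from the unit vectors `a, a', b, b', c, c' ∈ ℝ³`. -/
noncomputable def svetlichny (a a' b b' c c' : Fin 3 → ℝ) :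
    Matrix (Fin 2 × Fin 2 × Fin 2) (Fin 2 × Fin 2 × Fin 2) ℂ :=
  obs a ⊗ₖ ((obs b + obs b') ⊗ₖ obs c + (obs b - obs b') ⊗ₖ obs c')
    + obs a' ⊗ₖ ((obs b - obs b') ⊗ₖ obs c - (obs b + obs b') ⊗ₖ obs c')

/-- The vector `|GHZ⟩ = (|000⟩ + |111⟩)/√2`. -/
noncomputable def ghz : Fin 2 × Fin 2 × Fin 2 → ℂ :=
  fun x => if x = (0, 0, 0) ∨ x = (1, 1, 1) then (((Real.sqrt 2)⁻¹ : ℝ) : ℂ) else 0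

/-- The rank-one projector `|0⟩⟨0|`. -/
noncomputable def E00 : Matrix (Fin 2) (Fin 2) ℂ := !![1, 0; 0, 0]

/-- The state `ρ(p) = p|GHZ⟩⟨GHZ| + ((1-p)/4)|0⟩⟨0| ⊗ I₄`. -/
noncomputable def rhoGHZ (p : ℝ) :
    Matrix (Fin 2 × Fin 2 × Fin 2) (Fin 2 × Fin 2 × Fin 2) ℂ :=
  (p : ℂ) • Matrix.vecMulVec ghz (star ghz)
    + (((1 - p) / 4 : ℝ) : ℂ) • (E00 ⊗ₖ (1 : Matrix (Fin 2 × Fin 2) (Fin 2 × Fin 2) ℂ))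

/-- The normalization factor `N(p,x,y,z)` of the filtered state of `ρ(p)`. -/
noncomputable def Nghz (p x y z : ℝ) : ℝ :=
  p / 2 + (1 - p) / 4 * x ^ 2 + (1 - p) / 4 * (x ^ 2 * y ^ 2)
    + (1 - p) / 4 * (x ^ 2 * z ^ 2) + (1 + p) / 4 * (x ^ 2 * y ^ 2 * z ^ 2)

/-- The filtered state of `ρ(p)` with filters `diag(x,1), diag(y,1), diag(z,1)`. -/
noncomputable def rhoGHZFiltered (p x y z : ℝ) :
    Matrix (Fin 2 × Fin 2 × Fin 2) (Fin 2 × Fin 2 × Fin 2) ℂ :=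
  ((Nghz p x y z : ℝ) : ℂ)⁻¹ •
    ((Matrix.diagonal ![(x : ℂ), 1] ⊗ₖ (Matrix.diagonal ![(y : ℂ), 1] ⊗ₖ
        Matrix.diagonal ![(z : ℂ), 1]))
      * rhoGHZ p *
      (Matrix.diagonal ![(x : ℂ), 1] ⊗ₖ (Matrix.diagonal ![(y : ℂ), 1] ⊗ₖ
        Matrix.diagonal ![(z : ℂ), 1]))ᴴ)

/-! Write the transverse part of a Bloch vector `g` as the complex number `ĝ = g₁ + i g₂`. In
`ρ(p)` a product observable `σ_g ⊗ σ_h ⊗ σ_k` has expectation `p · Re(ĝ ĥ k̂)`. After filtering it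
becomes `(xyz p · Re(ĝ ĥ k̂) + D · g₃ h₃ k₃) / N` for an explicit `D`. So the correlation matrix has singular values
`√2 xyz p / N` (twice) and `|D| / N`. The Svetlichny expression becomes
`Re[(β + β')(αγ - α'γ') + (β - β')(αγ' + α'γ)]`, which Cauchy–Schwarz and the parallelogram law
bound by `4√2`, with equality for suitable coplanar settings. Hence `ρ(p)` gives at most
`4√2 p ≤ 4`, while the filtered state reaches `4√2 xyz p / N > 4` as soon as `√2 xyz p > N`. -/

noncomputable def transverse (g : Fin 3 → ℝ) : ℂ := ⟨g 0, g 1⟩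

noncomputable def ghzCorr (g h k : Fin 3 → ℝ) : ℝ := (transverse g * transverse h * transverse k).re

def zzzCorr (g h k : Fin 3 → ℝ) : ℝ := g 2 * h 2 * k 2

/-- `N · tr[ρ_F (σ₃ ⊗ σ₃ ⊗ σ₃)]` for the filtered state `ρ_F = rhoGHZFiltered p x y z`. -/
noncomputable def Dghz (p x y z : ℝ) : ℝ :=
  p / 2 * (x ^ 2 * y ^ 2 * z ^ 2 - 1) + (1 - p) / 4 * x ^ 2 * (y ^ 2 - 1) * (z ^ 2 - 1)

def svetlichnyForm (E : (Fin 3 → ℝ) → (Fin 3 → ℝ) → (Fin 3 → ℝ) → ℝ)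
    (a a' b b' c c' : Fin 3 → ℝ) : ℝ :=
  E a (b + b') c + E a (b - b') c' + E a' (b - b') c - E a' (b + b') c'

def corrMatOfForm (E : (Fin 3 → ℝ) → (Fin 3 → ℝ) → (Fin 3 → ℝ) → ℝ) :
    Matrix (Fin 3) (Fin 3 × Fin 3) ℝ :=
  fun j ik => E (Pi.single ik.1 1) (Pi.single j 1) (Pi.single ik.2 1)

lemma transverse_add (g h : Fin 3 → ℝ) : transverse (g + h) = transverse g + transverse h := rfl

lemma transverse_sub (g h : Fin 3 → ℝ) : transverse (g - h) = transverse g - transverse h := rfl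

lemma obs_add (g h : Fin 3 → ℝ) : obs (g + h) = obs g + obs h := by
  simp [obs, add_smul, Finset.sum_add_distrib]

lemma obs_sub (g h : Fin 3 → ℝ) : obs (g - h) = obs g - obs h := by
  simp [obs, sub_smul, Finset.sum_sub_distrib]

lemma pauli_eq_obs_single (i : Fin 3) : pauli i = obs (Pi.single i 1) := by
  fin_cases i <;> simp [obs]

lemma obs_eq_matrix (g : Fin 3 → ℝ) :
    obs g = !![((g 2 : ℝ) : ℂ), (g 0 : ℝ) - (g 1 : ℝ) * Complex.I;
               (g 0 : ℝ) + (g 1 : ℝ) * Complex.I, -((g 2 : ℝ) : ℂ)] := by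
  ext i j
  fin_cases i <;> fin_cases j <;> simp [obs, pauli, Fin.sum_univ_three]; ring

lemma kronecker_sub {l m n p α : Type*} [Ring α] (A : Matrix l m α) (B₁ B₂ : Matrix n p α) :
    A ⊗ₖ (B₁ - B₂) = A ⊗ₖ B₁ - A ⊗ₖ B₂ := by
  ext
  simp [mul_sub]

lemma trace_svetlichny_mul (ρ : Matrix (Fin 2 × Fin 2 × Fin 2) (Fin 2 × Fin 2 × Fin 2) ℂ)
    (E : (Fin 3 → ℝ) → (Fin 3 → ℝ) → (Fin 3 → ℝ) → ℝ)
    (hE : ∀ g h k, ((obs g ⊗ₖ (obs h ⊗ₖ obs k)) * ρ).trace = E g h k)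
    (a a' b b' c c' : Fin 3 → ℝ) :
    (svetlichny a a' b b' c c' * ρ).trace = svetlichnyForm E a a' b b' c c' := by
  simp only [svetlichny, ← obs_add, ← obs_sub, Matrix.kronecker_add, kronecker_sub,
    Matrix.add_mul, Matrix.sub_mul, Matrix.trace_add, Matrix.trace_sub, hE, svetlichnyForm]
  push_cast
  ring

lemma corrMat_eq_corrMatOfForm (ρ : Matrix (Fin 2 × Fin 2 × Fin 2) (Fin 2 × Fin 2 × Fin 2) ℂ)
    (E : (Fin 3 → ℝ) → (Fin 3 → ℝ) → (Fin 3 → ℝ) → ℝ)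
    (hE : ∀ g h k, ((obs g ⊗ₖ (obs h ⊗ₖ obs k)) * ρ).trace = E g h k) :
    corrMat ρ = corrMatOfForm E := by
  ext j ⟨i, k⟩
  rw [corrMat, corrMatOfForm, Matrix.trace_mul_comm]
  simp only [pauli_eq_obs_single, hE, Complex.ofReal_re]

lemma trace_kronecker_mul_rhoGHZ (p : ℝ) (A B C : Matrix (Fin 2) (Fin 2) ℂ) :
    ((A ⊗ₖ (B ⊗ₖ C)) * rhoGHZ p).trace =
      ((p / 2 : ℝ) : ℂ) * (A 0 0 * B 0 0 * C 0 0 + A 1 1 * B 1 1 * C 1 1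
        + A 0 1 * B 0 1 * C 0 1 + A 1 0 * B 1 0 * C 1 0)
      + (((1 - p) / 4 : ℝ) : ℂ) * A 0 0 * (B 0 0 + B 1 1) * (C 0 0 + C 1 1) := by
  have hs2 : (((√2 : ℝ) : ℂ))⁻¹ ^ 2 = 1 / 2 := by
    rw [← Complex.ofReal_inv, ← Complex.ofReal_pow]
    norm_num
  simp only [Matrix.trace, Matrix.diag, Matrix.mul_apply, rhoGHZ, Matrix.add_apply,
    Matrix.smul_apply, Matrix.vecMulVec_apply, Pi.star_apply, ghz, E00,
    Matrix.kroneckerMap_apply, Fintype.sum_prod_type, Fin.sum_univ_two]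
  push_cast
  norm_num [Fin.ext_iff, Prod.ext_iff]
  linear_combination (p * (A 0 0 * B 0 0 * C 0 0 + A 0 1 * B 0 1 * C 0 1
    + A 1 0 * B 1 0 * C 1 0 + A 1 1 * B 1 1 * C 1 1) : ℂ) * hs2

lemma trace_kronecker_mul_rhoGHZFiltered (p x y z : ℝ) (A B C : Matrix (Fin 2) (Fin 2) ℂ) :
    ((A ⊗ₖ (B ⊗ₖ C)) * rhoGHZFiltered p x y z).trace =
      ((Nghz p x y z)⁻¹ : ℝ) *
        (((diagonal ![(x : ℂ), 1] * A * diagonal ![(x : ℂ), 1]) ⊗ₖ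
          ((diagonal ![(y : ℂ), 1] * B * diagonal ![(y : ℂ), 1]) ⊗ₖ
            (diagonal ![(z : ℂ), 1] * C * diagonal ![(z : ℂ), 1]))) * rhoGHZ p).trace := by
  have hF : ∀ t : ℝ, (diagonal ![(t : ℂ), 1])ᴴ = diagonal ![(t : ℂ), 1] := by
    intro t
    rw [diagonal_conjTranspose]
    congr 1
    ext i
    fin_cases i <;> simp
  rw [rhoGHZFiltered, Matrix.mul_smul, Matrix.trace_smul, smul_eq_mul, Complex.ofReal_inv,
    ← Matrix.mul_assoc, ← Matrix.mul_assoc, Matrix.trace_mul_cycle, ← Matrix.mul_assoc]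
  simp only [Matrix.conjTranspose_kronecker, hF, ← Matrix.mul_kronecker_mul]

lemma trace_obs_kronecker_mul_rhoGHZ (p : ℝ) (g h k : Fin 3 → ℝ) :
    ((obs g ⊗ₖ (obs h ⊗ₖ obs k)) * rhoGHZ p).trace = (p * ghzCorr g h k : ℝ) := by
  rw [trace_kronecker_mul_rhoGHZ]
  simp only [obs_eq_matrix, ghzCorr, transverse, Matrix.of_apply, cons_val_zero, cons_val_one]
  apply Complex.ext <;>
    simp only [Complex.add_re, Complex.add_im, Complex.sub_re, Complex.sub_im, Complex.mul_re,
      Complex.mul_im, Complex.neg_re, Complex.neg_im, Complex.ofReal_re, Complex.ofReal_im,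
      Complex.I_re, Complex.I_im] <;> ring

lemma trace_obs_kronecker_mul_rhoGHZFiltered (p x y z : ℝ) (g h k : Fin 3 → ℝ) :
    ((obs g ⊗ₖ (obs h ⊗ₖ obs k)) * rhoGHZFiltered p x y z).trace =
      (x * y * z * p / Nghz p x y z * ghzCorr g h k
        + Dghz p x y z / Nghz p x y z * zzzCorr g h k : ℝ) := by
  rw [trace_kronecker_mul_rhoGHZFiltered, trace_kronecker_mul_rhoGHZ]
  simp only [obs_eq_matrix, ghzCorr, zzzCorr, Dghz, transverse, Matrix.mul_diagonal,
    Matrix.diagonal_mul, Matrix.of_apply, cons_val_zero, cons_val_one]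
  apply Complex.ext <;>
    simp only [Complex.add_re, Complex.add_im, Complex.sub_re, Complex.sub_im, Complex.mul_re,
      Complex.mul_im, Complex.neg_re, Complex.neg_im, Complex.ofReal_re, Complex.ofReal_im,
      Complex.I_re, Complex.I_im, Complex.one_re, Complex.one_im] <;> ring

lemma corrMatOfForm_mul_transpose (T D : ℝ) :
    corrMatOfForm (fun g h k => T * ghzCorr g h k + D * zzzCorr g h k) *
        (corrMatOfForm (fun g h k => T * ghzCorr g h k + D * zzzCorr g h k))ᵀ
      = diagonal ![2 * T ^ 2, 2 * T ^ 2, D ^ 2] := by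
  ext j l
  fin_cases j <;> fin_cases l <;>
    simp [corrMatOfForm, ghzCorr, zzzCorr, transverse, Matrix.mul_apply, Fintype.sum_prod_type,
      Fin.sum_univ_three, Pi.single_apply] <;> ring

lemma isRoot_charpoly_diagonal_iff {n R : Type*} [Fintype n] [DecidableEq n] [CommRing R]
    [IsDomain R] (d : n → R) (t : R) :
    (diagonal d).charpoly.IsRoot t ↔ ∃ i, t = d i := by
  simp [charpoly_diagonal, Polynomial.IsRoot, Polynomial.eval_prod, Finset.prod_eq_zero_iff,
    sub_eq_zero]

lemma isGreatest_sqrt_roots_charpoly_diagonal {T D : ℝ} (hT : 0 ≤ T) (hD : D ^ 2 ≤ 2 * T ^ 2) :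
    IsGreatest {s : ℝ | 0 ≤ s ∧ (diagonal ![2 * T ^ 2, 2 * T ^ 2, D ^ 2]).charpoly.IsRoot (s ^ 2)}
      (√2 * T) := by
  have hsq : (√2 * T) ^ 2 = 2 * T ^ 2 := by rw [mul_pow, Real.sq_sqrt zero_le_two]
  refine ⟨⟨by positivity, (isRoot_charpoly_diagonal_iff _ _).2 ⟨0, hsq⟩⟩, ?_⟩
  rintro s ⟨-, hroot⟩
  obtain ⟨i, hi⟩ := (isRoot_charpoly_diagonal_iff _ _).1 hroot
  refine le_of_sq_le_sq ?_ (by positivity)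
  rw [hsq, hi]
  fin_cases i <;> simp [hD]

lemma isGreatest_singularValue_corrMat_rhoGHZFiltered {p x y z : ℝ} (hN : 0 < Nghz p x y z)
    (hxyz : 0 ≤ x * y * z * p) (hD : Dghz p x y z ^ 2 ≤ 2 * (x * y * z * p) ^ 2) :
    IsGreatest
      {s : ℝ | 0 ≤ s ∧
        (corrMat (rhoGHZFiltered p x y z) *
          (corrMat (rhoGHZFiltered p x y z))ᵀ).charpoly.IsRoot (s ^ 2)}
      (√2 * p * x * y * z / Nghz p x y z) := by
  rw [corrMat_eq_corrMatOfForm _ _ (trace_obs_kronecker_mul_rhoGHZFiltered p x y z),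
    corrMatOfForm_mul_transpose]
  convert isGreatest_sqrt_roots_charpoly_diagonal (T := x * y * z * p / Nghz p x y z)
    (D := Dghz p x y z / Nghz p x y z) (by positivity) ?_ using 1
  · ring
  · rw [div_pow, div_pow, ← mul_div_assoc]
    gcongr

lemma norm_sq_sub_add_norm_sq_add_le (α α' γ γ' : ℂ) :
    ‖α * γ - α' * γ'‖ ^ 2 + ‖α * γ' + α' * γ‖ ^ 2
      ≤ 2 * (‖α‖ ^ 2 + ‖α'‖ ^ 2) * (‖γ‖ ^ 2 + ‖γ'‖ ^ 2) := by
  simp only [Complex.sq_norm, Complex.normSq_apply, Complex.mul_re, Complex.mul_im,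
    Complex.add_re, Complex.add_im, Complex.sub_re, Complex.sub_im]
  -- the left side is `(‖α‖² + ‖α'‖²)(‖γ‖² + ‖γ'‖²) - 4 Im(α α'ᶜ) Im(γ' γᶜ)`, and
  -- `‖α‖² + ‖α'‖² ± 2 Im(α α'ᶜ)` is a sum of two squares
  nlinarith [mul_nonneg
      (add_nonneg (sq_nonneg (α.re - α'.im)) (sq_nonneg (α.im + α'.re)))
      (add_nonneg (sq_nonneg (γ.re - γ'.im)) (sq_nonneg (γ.im + γ'.re))),
    mul_nonneg
      (add_nonneg (sq_nonneg (α.re + α'.im)) (sq_nonneg (α.im - α'.re)))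
      (add_nonneg (sq_nonneg (γ.re + γ'.im)) (sq_nonneg (γ.im - γ'.re)))]

lemma abs_re_svetlichny_le (α α' β β' γ γ' : ℂ) (hα : ‖α‖ ≤ 1) (hα' : ‖α'‖ ≤ 1)
    (hβ : ‖β‖ ≤ 1) (hβ' : ‖β'‖ ≤ 1) (hγ : ‖γ‖ ≤ 1) (hγ' : ‖γ'‖ ≤ 1) :
    |(α * (β + β') * γ + α * (β - β') * γ' + α' * (β - β') * γ - α' * (β + β') * γ').re|
      ≤ 4 * √2 := by
  set u := α * γ - α' * γ'
  set v := α * γ' + α' * γ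
  have hsplit : α * (β + β') * γ + α * (β - β') * γ' + α' * (β - β') * γ - α' * (β + β') * γ'
      = (β + β') * u + (β - β') * v := by ring
  have hββ' : ‖β + β'‖ ^ 2 + ‖β - β'‖ ^ 2 ≤ 4 := by
    rw [parallelogram_law_with_norm ℝ]
    nlinarith [norm_nonneg β, norm_nonneg β']
  have huv : ‖u‖ ^ 2 + ‖v‖ ^ 2 ≤ 8 := by
    refine (norm_sq_sub_add_norm_sq_add_le α α' γ γ').trans ?_
    have hαα' : ‖α‖ ^ 2 + ‖α'‖ ^ 2 ≤ 2 := by nlinarith [norm_nonneg α, norm_nonneg α']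
    have hγγ' : ‖γ‖ ^ 2 + ‖γ'‖ ^ 2 ≤ 2 := by nlinarith [norm_nonneg γ, norm_nonneg γ']
    nlinarith [mul_le_mul hαα' hγγ' (by positivity) (by norm_num)]
  have hre : |((β + β') * u + (β - β') * v).re| ≤ ‖β + β'‖ * ‖u‖ + ‖β - β'‖ * ‖v‖ := by
    refine (Complex.abs_re_le_norm _).trans ?_
    simpa only [norm_mul] using norm_add_le ((β + β') * u) ((β - β') * v)
  rw [hsplit]
  refine hre.trans (le_of_sq_le_sq ?_ (by positivity))
  -- Cauchy–Schwarz in `ℝ²`, then the two bounds above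
  nlinarith [sq_nonneg (‖β + β'‖ * ‖v‖ - ‖β - β'‖ * ‖u‖), Real.sq_sqrt (show (0 : ℝ) ≤ 2 by norm_num),
    mul_le_mul hββ' huv (by positivity) (by norm_num)]

lemma norm_transverse_le_one {g : Fin 3 → ℝ} (hg : ∑ i, g i ^ 2 = 1) : ‖transverse g‖ ≤ 1 := by
  rw [← sq_le_one_iff₀ (norm_nonneg _), Complex.sq_norm, Complex.normSq_mk, transverse]
  rw [Fin.sum_univ_three] at hg
  nlinarith [sq_nonneg (g 2)]

lemma abs_svetlichnyForm_ghzCorr_le {a a' b b' c c' : Fin 3 → ℝ}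
    (ha : ∑ i, a i ^ 2 = 1) (ha' : ∑ i, a' i ^ 2 = 1) (hb : ∑ i, b i ^ 2 = 1)
    (hb' : ∑ i, b' i ^ 2 = 1) (hc : ∑ i, c i ^ 2 = 1) (hc' : ∑ i, c' i ^ 2 = 1) :
    |svetlichnyForm ghzCorr a a' b b' c c'| ≤ 4 * √2 := by
  simpa only [svetlichnyForm, ghzCorr, transverse_add, transverse_sub, Complex.add_re,
    Complex.sub_re] using abs_re_svetlichny_le _ _ _ _ _ _ (norm_transverse_le_one ha)
    (norm_transverse_le_one ha') (norm_transverse_le_one hb) (norm_transverse_le_one hb')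
    (norm_transverse_le_one hc) (norm_transverse_le_one hc')

lemma norm_trace_svetlichny_mul_rhoGHZ_le {p : ℝ} (hp0 : 0 ≤ p) (hp : p ≤ 1 / √2)
    {a a' b b' c c' : Fin 3 → ℝ}
    (ha : ∑ i, a i ^ 2 = 1) (ha' : ∑ i, a' i ^ 2 = 1) (hb : ∑ i, b i ^ 2 = 1)
    (hb' : ∑ i, b' i ^ 2 = 1) (hc : ∑ i, c i ^ 2 = 1) (hc' : ∑ i, c' i ^ 2 = 1) :
    ‖(svetlichny a a' b b' c c' * rhoGHZ p).trace‖ ≤ 4 := by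
  rw [trace_svetlichny_mul _ (fun g h k => p * ghzCorr g h k) (trace_obs_kronecker_mul_rhoGHZ p),
    Complex.norm_real, Real.norm_eq_abs]
  have hform : svetlichnyForm (fun g h k => p * ghzCorr g h k) a a' b b' c c'
      = p * svetlichnyForm ghzCorr a a' b b' c c' := by
    simp only [svetlichnyForm]
    ring
  rw [hform, abs_mul, abs_of_nonneg hp0]
  calc p * |svetlichnyForm ghzCorr a a' b b' c c'| ≤ 1 / √2 * (4 * √2) :=
        mul_le_mul hp (abs_svetlichnyForm_ghzCorr_le ha ha' hb hb' hc hc') (abs_nonneg _)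
          (by positivity)
    _ = 4 := by field_simp

lemma exists_svetlichny_violation_rhoGHZFiltered {p x y z : ℝ} (hN : 0 < Nghz p x y z)
    (hviol : Nghz p x y z < √2 * p * x * y * z) :
    ∃ a a' b b' c c' : Fin 3 → ℝ,
      (∑ i : Fin 3, a i ^ 2 = 1) ∧ (∑ i : Fin 3, a' i ^ 2 = 1) ∧
      (∑ i : Fin 3, b i ^ 2 = 1) ∧ (∑ i : Fin 3, b' i ^ 2 = 1) ∧
      (∑ i : Fin 3, c i ^ 2 = 1) ∧ (∑ i : Fin 3, c' i ^ 2 = 1) ∧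
      4 < ‖(svetlichny a a' b b' c c' * rhoGHZFiltered p x y z).trace‖ := by
  have hs2 : √2 ^ 2 = 2 := Real.sq_sqrt zero_le_two
  -- transverse parts `α = γ = 1`, `α' = γ' = -i`, `β, β' = e^{±iπ/4}`: equality in the `4√2` bound
  refine ⟨![1, 0, 0], ![0, -1, 0], ![√2 / 2, √2 / 2, 0], ![√2 / 2, -(√2 / 2), 0],
    ![1, 0, 0], ![0, -1, 0], by simp [Fin.sum_univ_three], by simp [Fin.sum_univ_three],
    by simp [Fin.sum_univ_three, div_pow, hs2]; norm_num,
    by simp [Fin.sum_univ_three, div_pow, hs2]; norm_num,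
    by simp [Fin.sum_univ_three], by simp [Fin.sum_univ_three], ?_⟩
  rw [trace_svetlichny_mul _ _ (trace_obs_kronecker_mul_rhoGHZFiltered p x y z),
    Complex.norm_real, Real.norm_eq_abs]
  have hval : svetlichnyForm (fun g h k => x * y * z * p / Nghz p x y z * ghzCorr g h k
      + Dghz p x y z / Nghz p x y z * zzzCorr g h k) ![1, 0, 0] ![0, -1, 0]
      ![√2 / 2, √2 / 2, 0] ![√2 / 2, -(√2 / 2), 0] ![1, 0, 0] ![0, -1, 0]
      = 4 * (√2 * p * x * y * z / Nghz p x y z) := by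
    simp [svetlichnyForm, ghzCorr, zzzCorr, transverse]
    ring
  have hσ := (one_lt_div hN).2 hviol
  rw [hval, abs_of_pos (by linarith)]
  linarith

/- The witness `x = 7·10⁻⁷`, `y = z = 1000` has `xyz = 0.7`, close to the optimal
`xyz = 2√2 p / (1 + p)` at `p = 1/3`, and makes `x²y²`, `x²z²`, `x²` negligible; at `p = 0.3334`
the margin in `nghz_witness_lt` is below `10⁻⁵`. -/

lemma nghz_witness_pos {p : ℝ} (hp : 0.3334 < p) : 0 < Nghz p (7 / 10000000) 1000 1000 := by
  norm_num [Nghz] at hp ⊢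
  linarith

lemma nghz_witness_lt {p : ℝ} (hp : 0.3334 < p) :
    Nghz p (7 / 10000000) 1000 1000 < √2 * p * (7 / 10000000) * 1000 * 1000 := by
  have hsqrt : (1.414213 : ℝ) < √2 := by
    rw [Real.lt_sqrt (by norm_num)]
    norm_num
  norm_num [Nghz] at hp ⊢
  nlinarith

lemma dghz_witness_sq_le {p : ℝ} (hp : 0.3334 < p) :
    Dghz p (7 / 10000000) 1000 1000 ^ 2 ≤ 2 * (7 / 10000000 * 1000 * 1000 * p) ^ 2 := by
  norm_num [Dghz] at hp ⊢
  nlinarith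

theorem hidden_nonlocality_rhoGHZ_general (p : ℝ) (hp : 0.3334 < p) :
    ∃ x y z : ℝ, 0 < x ∧ 0 < y ∧ 0 < z ∧
      Real.sqrt 2 * p * x * y * z > Nghz p x y z ∧
      IsGreatest
        {s : ℝ | 0 ≤ s ∧
          (corrMat (rhoGHZFiltered p x y z) *
            (corrMat (rhoGHZFiltered p x y z))ᵀ).charpoly.IsRoot (s ^ 2)}
        (Real.sqrt 2 * p * x * y * z / Nghz p x y z) ∧
      1 < Real.sqrt 2 * p * x * y * z / Nghz p x y z ∧
      (∃ a a' b b' c c' : Fin 3 → ℝ,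
        (∑ i : Fin 3, a i ^ 2 = 1) ∧ (∑ i : Fin 3, a' i ^ 2 = 1) ∧
        (∑ i : Fin 3, b i ^ 2 = 1) ∧ (∑ i : Fin 3, b' i ^ 2 = 1) ∧
        (∑ i : Fin 3, c i ^ 2 = 1) ∧ (∑ i : Fin 3, c' i ^ 2 = 1) ∧
        4 < ‖(svetlichny a a' b b' c c' * rhoGHZFiltered p x y z).trace‖) ∧
      (p ≤ 1 / Real.sqrt 2 →
        ∀ a a' b b' c c' : Fin 3 → ℝ,
          (∑ i : Fin 3, a i ^ 2 = 1) → (∑ i : Fin 3, a' i ^ 2 = 1) →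
          (∑ i : Fin 3, b i ^ 2 = 1) → (∑ i : Fin 3, b' i ^ 2 = 1) →
          (∑ i : Fin 3, c i ^ 2 = 1) → (∑ i : Fin 3, c' i ^ 2 = 1) →
          ‖(svetlichny a a' b b' c c' * rhoGHZ p).trace‖ ≤ 4) := by
  have hp0 : 0 < p := lt_trans (by norm_num) hp
  have hN := nghz_witness_pos hp
  have hviol := nghz_witness_lt hp
  refine ⟨7 / 10000000, 1000, 1000, by norm_num, by norm_num, by norm_num, hviol,
    isGreatest_singularValue_corrMat_rhoGHZFiltered hN (by positivity) (dghz_witness_sq_le hp),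
    (one_lt_div hN).2 hviol, exists_svetlichny_violation_rhoGHZFiltered hN hviol, ?_⟩
  intro hple a a' b b' c c' ha ha' hb hb' hc hc'
  exact norm_trace_svetlichny_mul_rhoGHZ_le hp0.le hple ha ha' hb hb' hc hc'

/-- For every `0.3334 < p ≤ 1` there are filters with `√2·p·x·y·z > N(p,x,y,z)`; consequently
the maximal singular value of the correlation matrix of the filtered state is
`√2·p·x·y·z/N > 1` and the Svetlichny bound `4` is exceeded; in particular for
`0.3334 < p ≤ 1/√2` the state `ρ(p)` itself does not violate the Svetlichny inequality
but its filtered state does (hidden genuine nonlocality). -/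
theorem hidden_nonlocality_rhoGHZ (p : ℝ) (hp : 0.3334 < p) (hp1 : p ≤ 1) :
    ∃ x y z : ℝ, 0 < x ∧ 0 < y ∧ 0 < z ∧
      Real.sqrt 2 * p * x * y * z > Nghz p x y z ∧
      IsGreatest
        {s : ℝ | 0 ≤ s ∧
          (corrMat (rhoGHZFiltered p x y z) *
            (corrMat (rhoGHZFiltered p x y z))ᵀ).charpoly.IsRoot (s ^ 2)}
        (Real.sqrt 2 * p * x * y * z / Nghz p x y z) ∧
      1 < Real.sqrt 2 * p * x * y * z / Nghz p x y z ∧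
      (∃ a a' b b' c c' : Fin 3 → ℝ,
        (∑ i : Fin 3, a i ^ 2 = 1) ∧ (∑ i : Fin 3, a' i ^ 2 = 1) ∧
        (∑ i : Fin 3, b i ^ 2 = 1) ∧ (∑ i : Fin 3, b' i ^ 2 = 1) ∧
        (∑ i : Fin 3, c i ^ 2 = 1) ∧ (∑ i : Fin 3, c' i ^ 2 = 1) ∧
        4 < ‖(svetlichny a a' b b' c c' * rhoGHZFiltered p x y z).trace‖) ∧
      (p ≤ 1 / Real.sqrt 2 →
        ∀ a a' b b' c c' : Fin 3 → ℝ,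
          (∑ i : Fin 3, a i ^ 2 = 1) → (∑ i : Fin 3, a' i ^ 2 = 1) →
          (∑ i : Fin 3, b i ^ 2 = 1) → (∑ i : Fin 3, b' i ^ 2 = 1) →
          (∑ i : Fin 3, c i ^ 2 = 1) → (∑ i : Fin 3, c' i ^ 2 = 1) →
          ‖(svetlichny a a' b b' c c' * rhoGHZ p).trace‖ ≤ 4) :=
  hidden_nonlocality_rhoGHZ_general p hp
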